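/- Let γ be a path in [n]×[k]. (1) For every face map d_r : [n] → [n+1] there are a unique index κ and a unique path γ' in [n+1]×[k] with γ' ∘ d_κ = (d_r × id) ∘ γ, and for all (i,j) ∈ [n+k]×[k] one has E_{γ'}(d_κ(i), j) = (d_r × id)(E_γ(i,j)). (2) For every face map d_t : [k] → [k+1] there are a unique index κ and a unique path γ' in [n]×[k+1] with γ' ∘ d_κ = (id × d_t) ∘ γ, and for all (i,j) ∈ [n+k]×[k] one has E_{γ'}(d_κ(i), d_t(j)) = (id × d_t)(E_γ(i,j)). -/

import Mathlib

/-!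
A path `γ = (a, b)` is the same as a monotone map with `a i + b i = i` for all `i` that ends at
`(n, k)`, and its first coordinate takes every value since it moves in unit steps. Let `δ` be `γ`
followed by a horizontal step to `(n + 1, k)`, and `κ` the first index with `(δ κ).1 = r`. Then
`i < κ` exactly when `a i < r`, so inserting the vertex `δ κ` at position `κ` into
`(d_r × id) ∘ γ` preserves monotonicity and the sum rule, which gives `γ'`. Conversely, in any
solution `γ''` with index `κ''` the value `r`, omitted by `d_r`, is attained only at `κ''`, and
monotonicity forces `i < κ''` exactly when `a i < r`; this pins down `κ''`, and the sum rule pins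
down `γ'' κ''`. The second face is the first one for the transposed path, and the formulas for
`E` hold because `d_t` is monotone and hence commutes with `max`.
-/

/-- `γ` is a path in `[n] × [k]` (a simplex of maximal dimension of `Δⁿ × Δᵏ`):
it starts at `(0,0)`, ends at `(n,k)`, and each step increases exactly one
coordinate by exactly `1`.  The parameter `m` records the length of the path;
necessarily `m = n + k`. -/
def IsPath (n k m : ℕ) (γ : Fin (m + 1) → Fin (n + 1) × Fin (k + 1)) : Prop :=
  γ 0 = (0, 0) ∧
  γ (Fin.last m) = (Fin.last n, Fin.last k) ∧
  ∀ i : Fin m,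
    (((γ i.succ).1 : ℕ) = ((γ i.castSucc).1 : ℕ) + 1 ∧ (γ i.succ).2 = (γ i.castSucc).2) ∨
    ((γ i.succ).1 = (γ i.castSucc).1 ∧ ((γ i.succ).2 : ℕ) = ((γ i.castSucc).2 : ℕ) + 1)

/-- The extension `E_γ : [n+k] × [k] → [n] × [k]` of a path `γ`, given by
`E_γ(i, j) = (a_i, max (b_i) j)` where `γ i = (a_i, b_i)`. -/
def pathExt (n k m : ℕ) (γ : Fin (m + 1) → Fin (n + 1) × Fin (k + 1)) :
    Fin (m + 1) × Fin (k + 1) → Fin (n + 1) × Fin (k + 1) :=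
  fun p => ((γ p.1).1, max (γ p.1).2 p.2)

/-- The strict order on paths: `γ₁ < γ₂` if at the least index `s` where they differ the
first coordinate of `γ₁ s` is smaller than that of `γ₂ s`. -/
def pathLT (n k m : ℕ) (γ₁ γ₂ : Fin (m + 1) → Fin (n + 1) × Fin (k + 1)) : Prop :=
  ∃ s : Fin (m + 1), γ₁ s ≠ γ₂ s ∧ (∀ t : Fin (m + 1), t < s → γ₁ t = γ₂ t) ∧
    (γ₁ s).1 < (γ₂ s).1

theorem Fin.monotone_insertNth {α : Type*} [Preorder α] {n : ℕ} {p : Fin (n + 1)} {x : α}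
    {f : Fin n → α} (hf : Monotone f) (hlo : ∀ i, i.castSucc < p → f i ≤ x)
    (hhi : ∀ i, p ≤ i.castSucc → x ≤ f i) :
    Monotone (Fin.insertNth (α := fun _ ↦ α) p x f) := by
  intro a b hab
  obtain ha | ⟨i, rfl⟩ := p.eq_self_or_eq_succAbove a <;>
    obtain hb | ⟨j, rfl⟩ := p.eq_self_or_eq_succAbove b
  · rw [ha, hb]
  · subst ha
    rw [Fin.insertNth_apply_same, Fin.insertNth_apply_succAbove]
    exact hhi j ((Fin.lt_succAbove_iff_le_castSucc _ _).1
      (hab.lt_of_ne (Fin.succAbove_ne _ _).symm))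
  · subst hb
    rw [Fin.insertNth_apply_same, Fin.insertNth_apply_succAbove]
    exact hlo i ((Fin.succAbove_lt_iff_castSucc_lt _ _).1 (hab.lt_of_ne (Fin.succAbove_ne _ _)))
  · simp only [Fin.insertNth_apply_succAbove]
    exact hf (Fin.succAbove_le_succAbove_iff.1 hab)

theorem Fin.eq_of_forall_castSucc_lt_iff {n : ℕ} {p q : Fin (n + 1)}
    (h : ∀ i : Fin n, i.castSucc < p ↔ i.castSucc < q) : p = q :=
  Fin.succAbove_left_injective <| funext fun i => by simp only [Fin.succAbove, h]

namespace IsPath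

variable {n k m : ℕ} {γ : Fin (m + 1) → Fin (n + 1) × Fin (k + 1)}

theorem fst_add_snd (h : IsPath n k m γ) (i : Fin (m + 1)) :
    ((γ i).1 : ℕ) + (γ i).2 = i := by
  induction i using Fin.induction with
  | zero => simp [h.1]
  | succ i ih =>
    rcases h.2.2 i with ⟨h1, h2⟩ | ⟨h1, h2⟩ <;>
      simp only [Fin.val_succ, Fin.val_castSucc, h1, h2] at ih ⊢ <;> omega

theorem length_eq (h : IsPath n k m γ) : m = n + k := by
  simpa [h.2.1] using (h.fst_add_snd (Fin.last m)).symm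

theorem monotone (h : IsPath n k m γ) : Monotone γ :=
  Fin.monotone_iff_le_succ.2 fun i => by
    rcases h.2.2 i with ⟨h1, h2⟩ | ⟨h1, h2⟩ <;>
      simp only [Prod.le_def, Fin.le_iff_val_le_val, h1, h2] <;> omega

theorem of_monotone (hmono : Monotone γ) (hsum : ∀ i, ((γ i).1 : ℕ) + (γ i).2 = i)
    (hm : m = n + k) : IsPath n k m γ := by
  refine ⟨?_, ?_, fun i => ?_⟩
  · have h0 := hsum 0
    simp only [Fin.val_zero] at h0
    ext <;> simp only [Fin.val_zero] <;> omega
  · have hl := hsum (Fin.last m)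
    have := (γ (Fin.last m)).1.is_le
    have := (γ (Fin.last m)).2.is_le
    simp only [Fin.val_last] at hl
    ext <;> simp only [Fin.val_last] <;> omega
  · have hle := Prod.mk_le_mk.1 (hmono i.castSucc_le_succ)
    have := hsum i.castSucc
    have := hsum i.succ
    simp only [Fin.le_iff_val_le_val, Fin.ext_iff, Fin.val_succ, Fin.val_castSucc] at *
    omega

theorem swap (h : IsPath n k m γ) : IsPath k n m (Prod.swap ∘ γ) := by
  obtain ⟨h0, hl, hs⟩ := h
  refine ⟨by simp [h0], by simp [hl], fun i => ?_⟩
  rcases hs i with ⟨h1, h2⟩ | ⟨h1, h2⟩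
  · exact Or.inr ⟨h2, h1⟩
  · exact Or.inl ⟨h2, h1⟩

theorem apply_eq_of_fst_eq {γ₁ γ₂ : Fin (m + 1) → Fin (n + 1) × Fin (k + 1)}
    (h₁ : IsPath n k m γ₁) (h₂ : IsPath n k m γ₂) {i : Fin (m + 1)}
    (h : (γ₁ i).1 = (γ₂ i).1) : γ₁ i = γ₂ i := by
  have := h₁.fst_add_snd i
  have := h₂.fst_add_snd i
  ext
  · rw [h]
  · rw [h] at *; omega

theorem exists_fst_eq (h : IsPath n k m γ) (a : Fin (n + 1)) :
    ∃ i, (γ i).1 = a ∧ ∀ j < i, (γ j).1 < a := by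
  have hex : ∃ i, a ≤ (γ i).1 := ⟨Fin.last m, by simp [h.2.1, Fin.le_last]⟩
  refine ⟨Fin.find _ hex, le_antisymm ?_ (Fin.find_spec hex),
    fun j hj => not_le.1 (Fin.find_min hex hj)⟩
  obtain h0 | ⟨j, hj⟩ := (Fin.find _ hex).eq_zero_or_eq_succ
  · simp [h0, h.1]
  · have hprev := not_le.1 (Fin.find_min hex (hj ▸ j.castSucc_lt_succ))
    rw [hj]
    rcases h.2.2 j with ⟨h1, -⟩ | ⟨h1, -⟩
    · rw [Fin.le_iff_val_le_val, h1]; exact hprev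
    · rw [h1]; exact hprev.le

end IsPath

theorem isPath_insertNth {n k m : ℕ} {f : Fin (m + 1) → Fin (n + 1) × Fin (k + 1)}
    {κ : Fin (m + 2)} {v : Fin (n + 1) × Fin (k + 1)} (hf : Monotone f)
    (hlo : ∀ x, x.castSucc < κ → f x ≤ v) (hhi : ∀ x, κ ≤ x.castSucc → v ≤ f x)
    (hsum : ∀ x, ((f x).1 : ℕ) + (f x).2 = κ.succAbove x) (hv : (v.1 : ℕ) + v.2 = κ)
    (hm : m + 1 = n + k) : IsPath n k (m + 1) (Fin.insertNth κ v f) :=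
  IsPath.of_monotone (Fin.monotone_insertNth hf hlo hhi)
    ((Fin.forall_iff_succAbove κ).2 ⟨by simpa using hv, by simpa using hsum⟩) hm

namespace IsPath

variable {n k m : ℕ} {γ : Fin (m + 1) → Fin (n + 1) × Fin (k + 1)}

theorem insertNth_last (h : IsPath n k m γ) :
    IsPath (n + 1) k (m + 1)
      (Fin.insertNth (Fin.last (m + 1)) (Fin.last (n + 1), Fin.last k)
        (Prod.map Fin.castSucc id ∘ γ)) := by
  have hm := h.length_eq
  refine isPath_insertNth ((Fin.strictMono_castSucc.monotone.prodMap monotone_id).comp h.monotone)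
    (fun _ _ => Prod.mk_le_mk.2 ⟨Fin.le_last _, Fin.le_last _⟩)
    (fun x hx => absurd hx (Fin.castSucc_lt_last x).not_ge)
    (fun x => by simpa using h.fst_add_snd x) ?_ (by omega)
  simp only [Fin.val_last]
  omega

theorem exists_comp_succAbove_fst (h : IsPath n k m γ) (r : Fin (n + 2)) :
    ∃ (κ : Fin (m + 2)) (γ' : Fin (m + 2) → Fin (n + 2) × Fin (k + 1)),
      IsPath (n + 1) k (m + 1) γ' ∧ γ' ∘ κ.succAbove = Prod.map r.succAbove id ∘ γ := by
  set δ : Fin (m + 2) → Fin (n + 2) × Fin (k + 1) := Fin.insertNth (Fin.last (m + 1))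
    (Fin.last (n + 1), Fin.last k) (Prod.map Fin.castSucc id ∘ γ)
  have hδ : IsPath (n + 1) k (m + 1) δ := h.insertNth_last
  have hδ_castSucc : ∀ x, δ x.castSucc = ((γ x).1.castSucc, (γ x).2) := fun x => by
    simp [δ, Fin.insertNth_last', Prod.map]
  obtain ⟨κ, hκ, hκ_min⟩ := hδ.exists_fst_eq r
  have hside : ∀ x, x.castSucc < κ ↔ (γ x).1.castSucc < r := fun x =>
    ⟨fun hx => by simpa [hδ_castSucc] using hκ_min _ hx, fun hx => not_le.1 fun hκx =>
      hx.not_ge (by simpa [hκ, hδ_castSucc] using (hδ.monotone hκx).1)⟩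
  have hsame : ∀ x,
      (x.castSucc < κ ∧ κ.succAbove x = x.castSucc ∧ r.succAbove (γ x).1 = (γ x).1.castSucc) ∨
      (κ ≤ x.castSucc ∧ κ.succAbove x = x.succ ∧ r.succAbove (γ x).1 = (γ x).1.succ) :=
    fun x => by
    by_cases hx : x.castSucc < κ
    · exact Or.inl ⟨hx, Fin.succAbove_of_castSucc_lt _ _ hx,
        Fin.succAbove_of_castSucc_lt _ _ ((hside x).1 hx)⟩
    · exact Or.inr ⟨not_lt.1 hx, Fin.succAbove_of_le_castSucc _ _ (not_lt.1 hx),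
        Fin.succAbove_of_le_castSucc _ _ (not_lt.1 ((hside x).not.1 hx))⟩
  refine ⟨κ, _, isPath_insertNth
    ((Fin.strictMono_succAbove r).monotone.prodMap monotone_id |>.comp h.monotone)
    (fun x hx => ?_) (fun x hx => ?_) (fun x => ?_) (hδ.fst_add_snd κ)
    (by have := h.length_eq; omega), Fin.insertNth_comp_succAbove _ _ _⟩
  · obtain ⟨-, -, hr⟩ | ⟨hge, -⟩ := hsame x
    · calc _ = δ x.castSucc := (hδ_castSucc x).symm ▸ Prod.ext hr rfl
        _ ≤ δ κ := hδ.monotone hx.le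
    · exact absurd hx hge.not_gt
  · obtain ⟨hlt, -⟩ | ⟨-, -, hr⟩ := hsame x
    · exact absurd hx hlt.not_ge
    · calc δ κ ≤ δ x.castSucc := hδ.monotone hx
        _ = ((γ x).1.castSucc, (γ x).2) := hδ_castSucc x
        _ ≤ ((γ x).1.succ, (γ x).2) := Prod.mk_le_mk.2 ⟨Fin.castSucc_le_succ _, le_rfl⟩
        _ = Prod.map r.succAbove id (γ x) := Prod.ext hr.symm rfl
  · have := h.fst_add_snd x
    obtain ⟨-, hκ, hr⟩ | ⟨-, hκ, hr⟩ := hsame x <;>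
      simp only [Function.comp_apply, Prod.map_fst, Prod.map_snd, id_eq, Fin.val_castSucc,
        Fin.val_succ, hκ, hr] <;> omega

section

variable {γ' γ₁ γ₂ : Fin (m + 2) → Fin (n + 2) × Fin (k + 1)} {κ κ₁ κ₂ : Fin (m + 2)}
  {r : Fin (n + 2)}

theorem fst_apply_eq_of_comp_succAbove (h' : IsPath (n + 1) k (m + 1) γ')
    (hc : γ' ∘ κ.succAbove = Prod.map r.succAbove id ∘ γ) : (γ' κ).1 = r := by
  obtain ⟨y, hy, -⟩ := h'.exists_fst_eq r
  obtain rfl | ⟨x, rfl⟩ := κ.eq_self_or_eq_succAbove y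
  · exact hy
  · exact absurd (congrArg Prod.fst (congrFun hc x) ▸ hy) (Fin.succAbove_ne _ _)

theorem castSucc_lt_iff_of_comp_succAbove (h' : IsPath (n + 1) k (m + 1) γ')
    (hc : γ' ∘ κ.succAbove = Prod.map r.succAbove id ∘ γ) (x : Fin (m + 1)) :
    x.castSucc < κ ↔ (γ x).1.castSucc < r := by
  have hκ := h'.fst_apply_eq_of_comp_succAbove hc
  have hx : (γ' (κ.succAbove x)).1 = r.succAbove (γ x).1 := congrArg Prod.fst (congrFun hc x)
  rw [← Fin.succAbove_lt_iff_castSucc_lt, ← Fin.succAbove_lt_iff_castSucc_lt]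
  constructor
  · intro hlt
    refine lt_of_le_of_ne ?_ (Fin.succAbove_ne _ _)
    simpa [hκ, hx] using (h'.monotone hlt.le).1
  · intro hlt
    by_contra hge
    have := (h'.monotone (not_lt.1 hge)).1
    rw [hκ, hx] at this
    exact hlt.not_ge this

theorem eq_of_comp_succAbove_fst (h₁ : IsPath (n + 1) k (m + 1) γ₁)
    (h₂ : IsPath (n + 1) k (m + 1) γ₂) (hc₁ : γ₁ ∘ κ₁.succAbove = Prod.map r.succAbove id ∘ γ)
    (hc₂ : γ₂ ∘ κ₂.succAbove = Prod.map r.succAbove id ∘ γ) : κ₁ = κ₂ ∧ γ₁ = γ₂ := by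
  obtain rfl : κ₁ = κ₂ := Fin.eq_of_forall_castSucc_lt_iff fun x =>
    (h₁.castSucc_lt_iff_of_comp_succAbove hc₁ x).trans
      (h₂.castSucc_lt_iff_of_comp_succAbove hc₂ x).symm
  refine ⟨rfl, funext <| (Fin.forall_iff_succAbove κ₁).2 ⟨h₁.apply_eq_of_fst_eq h₂ ?_,
    fun x => (congrFun hc₁ x).trans (congrFun hc₂ x).symm⟩⟩
  rw [h₁.fst_apply_eq_of_comp_succAbove hc₁, h₂.fst_apply_eq_of_comp_succAbove hc₂]

end

theorem exists_comp_succAbove_snd (h : IsPath n k m γ) (t : Fin (k + 2)) :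
    ∃ (κ : Fin (m + 2)) (γ' : Fin (m + 2) → Fin (n + 1) × Fin (k + 2)),
      IsPath n (k + 1) (m + 1) γ' ∧ γ' ∘ κ.succAbove = Prod.map id t.succAbove ∘ γ := by
  obtain ⟨κ, δ, hδ, hc⟩ := h.swap.exists_comp_succAbove_fst t
  exact ⟨κ, Prod.swap ∘ δ, hδ.swap, by rw [Function.comp_assoc, hc]; rfl⟩

theorem eq_of_comp_succAbove_snd {γ₁ γ₂ : Fin (m + 2) → Fin (n + 1) × Fin (k + 2)}
    {κ₁ κ₂ : Fin (m + 2)} {t : Fin (k + 2)} (h₁ : IsPath n (k + 1) (m + 1) γ₁)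
    (h₂ : IsPath n (k + 1) (m + 1) γ₂) (hc₁ : γ₁ ∘ κ₁.succAbove = Prod.map id t.succAbove ∘ γ)
    (hc₂ : γ₂ ∘ κ₂.succAbove = Prod.map id t.succAbove ∘ γ) : κ₁ = κ₂ ∧ γ₁ = γ₂ := by
  obtain ⟨hκ, hγ⟩ := eq_of_comp_succAbove_fst (γ := Prod.swap ∘ γ) h₁.swap h₂.swap
    (by rw [Function.comp_assoc, hc₁]; rfl) (by rw [Function.comp_assoc, hc₂]; rfl)
  exact ⟨hκ, Prod.swap_injective.comp_left hγ⟩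

end IsPath

/-- Compatibility of path extensions with face maps `d_r = Fin.succAbove r`.
(1) For every face map `d_r : [n] → [n+1]` there are a unique index `κ` and a unique path
`γ'` in `[n+1] × [k]` with `γ' ∘ d_κ = (d_r × id) ∘ γ`, and
`E_{γ'}(d_κ i, j) = (d_r × id)(E_γ(i, j))`.
(2) For every face map `d_t : [k] → [k+1]` there are a unique index `κ` and a unique path
`γ'` in `[n] × [k+1]` with `γ' ∘ d_κ = (id × d_t) ∘ γ`, and
`E_{γ'}(d_κ i, d_t j) = (id × d_t)(E_γ(i, j))`. -/
theorem pathExt_compat_faces (n k : ℕ)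
    (γ : Fin (n + k + 1) → Fin (n + 1) × Fin (k + 1)) (hγ : IsPath n k (n + k) γ) :
    (∀ r : Fin (n + 2),
      ∃ (κ : Fin (n + k + 2)) (γ' : Fin (n + k + 2) → Fin (n + 2) × Fin (k + 1)),
        IsPath (n + 1) k (n + k + 1) γ' ∧
        (∀ x : Fin (n + k + 1), γ' (κ.succAbove x) = (r.succAbove (γ x).1, (γ x).2)) ∧
        (∀ (i : Fin (n + k + 1)) (j : Fin (k + 1)),
          pathExt (n + 1) k (n + k + 1) γ' (κ.succAbove i, j) =
            (r.succAbove (pathExt n k (n + k) γ (i, j)).1,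
              (pathExt n k (n + k) γ (i, j)).2)) ∧
        (∀ (κ' : Fin (n + k + 2)) (γ'' : Fin (n + k + 2) → Fin (n + 2) × Fin (k + 1)),
          IsPath (n + 1) k (n + k + 1) γ'' →
          (∀ x : Fin (n + k + 1), γ'' (κ'.succAbove x) = (r.succAbove (γ x).1, (γ x).2)) →
          κ' = κ ∧ γ'' = γ')) ∧
    (∀ t : Fin (k + 2),
      ∃ (κ : Fin (n + k + 2)) (γ' : Fin (n + k + 2) → Fin (n + 1) × Fin (k + 2)),
        IsPath n (k + 1) (n + k + 1) γ' ∧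
        (∀ x : Fin (n + k + 1), γ' (κ.succAbove x) = ((γ x).1, t.succAbove (γ x).2)) ∧
        (∀ (i : Fin (n + k + 1)) (j : Fin (k + 1)),
          pathExt n (k + 1) (n + k + 1) γ' (κ.succAbove i, t.succAbove j) =
            ((pathExt n k (n + k) γ (i, j)).1,
              t.succAbove (pathExt n k (n + k) γ (i, j)).2)) ∧
        (∀ (κ' : Fin (n + k + 2)) (γ'' : Fin (n + k + 2) → Fin (n + 1) × Fin (k + 2)),
          IsPath n (k + 1) (n + k + 1) γ'' →
          (∀ x : Fin (n + k + 1), γ'' (κ'.succAbove x) = ((γ x).1, t.succAbove (γ x).2)) →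
          κ' = κ ∧ γ'' = γ')) := by
  refine ⟨fun r => ?_, fun t => ?_⟩
  · obtain ⟨κ, γ', hγ', hc⟩ := hγ.exists_comp_succAbove_fst r
    refine ⟨κ, γ', hγ', congrFun hc, fun i j => ?_,
      fun κ' γ'' hγ'' hc'' => hγ''.eq_of_comp_succAbove_fst hγ' (funext hc'') hc⟩
    have hi : γ' (κ.succAbove i) = (r.succAbove (γ i).1, (γ i).2) := congrFun hc i
    simp only [pathExt, hi]
  · obtain ⟨κ, γ', hγ', hc⟩ := hγ.exists_comp_succAbove_snd t
    refine ⟨κ, γ', hγ', congrFun hc, fun i j => ?_,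
      fun κ' γ'' hγ'' hc'' => hγ''.eq_of_comp_succAbove_snd hγ' (funext hc'') hc⟩
    have hi : γ' (κ.succAbove i) = ((γ i).1, t.succAbove (γ i).2) := congrFun hc i
    simp only [pathExt, hi, (Fin.strictMono_succAbove t).monotone.map_max]
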